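/- Under the bandwagon rating process, the expected squared error of the sample mean has the closed form E[(p̄_n - p)²] = p(1-p) · ( 1/n² + Σ_{i=1}^{n-1} (1/i²) · Π_{j=i+1}^{n} ((j-1)(j+1-2λ_j)/j²) ). -/

import Mathlib

open MeasureTheory ProbabilityTheory Finset Filter

/-- Sample mean of the first `n` ratings (ratings are indexed from 1). -/
noncomputable def pbar {Ω : Type*} (r : ℕ → Ω → ℝ) (n : ℕ) (ω : Ω) : ℝ :=
  (∑ i ∈ Finset.Icc 1 n, r i ω) / n

/-- σ-algebra generated by the first `n` ratings. -/
def ratingsAlg {Ω : Type*} (r : ℕ → Ω → ℝ) (n : ℕ) : MeasurableSpace Ω :=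
  ⨆ i ∈ Finset.Icc 1 n, MeasurableSpace.comap (r i) (inferInstance : MeasurableSpace ℝ)

/-- The bandwagon rating process of Xie et al., as used in the paper. -/
structure Bandwagon {Ω : Type*} [MeasurableSpace Ω] (μ : Measure Ω)
    (p : ℝ) (lam : ℕ → ℝ) (r : ℕ → Ω → ℝ) : Prop where
  prob : IsProbabilityMeasure μ
  hp : 0 < p ∧ p < 1
  hlam1 : lam 1 = 1
  hlam_nonneg : ∀ n, 1 ≤ n → 0 ≤ lam n
  hlam_mono : ∀ n, 2 ≤ n → lam n ≤ lam (n - 1)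
  hmeas : ∀ n, Measurable (r n)
  hbin : ∀ n, 1 ≤ n → ∀ ω, r n ω = 0 ∨ r n ω = 1
  hfirst : ∫ ω, r 1 ω ∂μ = p
  hcond : ∀ n, 2 ≤ n →
    μ[r n | ratingsAlg r (n - 1)] =ᵐ[μ]
      fun ω => lam n * p + (1 - lam n) * pbar r (n - 1) ω

/-- Affine-corrected rating `r̂ᵢ`. -/
noncomputable def rhat {Ω : Type*} (r : ℕ → Ω → ℝ) (lam : ℕ → ℝ) (i : ℕ) (ω : Ω) : ℝ :=
  (r i ω - (1 - lam i) * pbar r (i - 1) ω) / lam i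

/-!
Conditioning on the first `n` ratings gives `E[rₙ₊₁ - p | r₁, …, rₙ] = (1 - λₙ₊₁)(p̄ₙ - p)`.
Integrating this against `1` shows inductively that every rating and every sample mean has
mean `p`; integrating it against `p̄ₙ - p` evaluates the cross term in the square of
`p̄ₙ₊₁ - p = (n (p̄ₙ - p) + (rₙ₊₁ - p)) / (n + 1)`. Since ratings are binary,
`E[(rₙ - p)²] = p(1 - p)`, and `Vₙ = E[(p̄ₙ - p)²]` satisfies the linear recursion
`Vₙ₊₁ = n (n + 2 - 2λₙ₊₁) / (n + 1)² · Vₙ + p(1 - p) / (n + 1)²`, whose solution from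
`V₁ = p(1 - p)` is the closed form.
-/

theorem eq_sum_mul_prod_of_linear_rec {R : Type*} [CommSemiring R] {a b v : ℕ → R}
    (h1 : v 1 = b 1) (hrec : ∀ m, 1 ≤ m → v (m + 1) = a (m + 1) * v m + b (m + 1)) :
    ∀ n, 1 ≤ n → v n = ∑ i ∈ Icc 1 n, b i * ∏ j ∈ Icc (i + 1) n, a j := by
  intro n hn
  induction n, hn using Nat.le_induction with
  | base => simp [h1]
  | succ n hn ih =>
    rw [hrec n hn, ih, sum_Icc_succ_top (by omega), mul_sum,
      Icc_eq_empty (by omega : ¬n + 1 + 1 ≤ n + 1), prod_empty, mul_one]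
    congr 1
    refine sum_congr rfl fun i hi => ?_
    rw [prod_Icc_succ_top (by grind)]
    ring

section RatingAverages

variable {Ω : Type*} {r : ℕ → Ω → ℝ}

theorem pbar_one : pbar r 1 = r 1 := by
  ext ω; simp [pbar]

theorem pbar_succ (n : ℕ) (ω : Ω) :
    pbar r (n + 1) ω = (n * pbar r n ω + r (n + 1) ω) / (n + 1) := by
  rcases n.eq_zero_or_pos with rfl | hn
  · simp [pbar]
  · simp only [pbar, sum_Icc_succ_top (by omega : 1 ≤ n + 1)]
    push_cast
    field_simp

theorem pbar_mem_Icc {n : ℕ} (hr : ∀ i, 1 ≤ i → ∀ ω, r i ω ∈ Set.Icc 0 1) (ω : Ω) :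
    pbar r n ω ∈ Set.Icc (0 : ℝ) 1 := by
  rcases n.eq_zero_or_pos with rfl | hn
  · simp [pbar]
  have hmem : ∀ i ∈ Icc 1 n, r i ω ∈ Set.Icc 0 1 := fun i hi => hr i (mem_Icc.mp hi).1 ω
  have hsum : ∑ i ∈ Icc 1 n, r i ω ≤ n := by
    simpa using sum_le_sum fun i hi => (hmem i hi).2
  exact ⟨div_nonneg (sum_nonneg fun i hi => (hmem i hi).1) n.cast_nonneg,
    div_le_one_of_le₀ hsum n.cast_nonneg⟩

theorem measurable_ratingsAlg_rating {i n : ℕ} (hi : i ∈ Icc 1 n) :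
    Measurable[ratingsAlg r n] (r i) :=
  measurable_iff_comap_le.mpr <| le_iSup₂ (f := fun i (_ : i ∈ Icc 1 n) =>
    MeasurableSpace.comap (r i) (inferInstance : MeasurableSpace ℝ)) i hi

theorem measurable_ratingsAlg_pbar (n : ℕ) : Measurable[ratingsAlg r n] (pbar r n) := by
  unfold pbar
  exact (Finset.measurable_sum _ fun i hi => measurable_ratingsAlg_rating hi).div_const _

variable [MeasurableSpace Ω]

theorem measurable_pbar (hr : ∀ i, Measurable (r i)) (n : ℕ) : Measurable (pbar r n) := by
  unfold pbar; fun_prop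

theorem ratingsAlg_le (hr : ∀ i, Measurable (r i)) (n : ℕ) :
    ratingsAlg r n ≤ ‹MeasurableSpace Ω› :=
  iSup₂_le fun i _ => (hr i).comap_le

end RatingAverages

namespace Bandwagon

variable {Ω : Type*} [MeasurableSpace Ω] {μ : Measure Ω} {p : ℝ} {lam : ℕ → ℝ}
  {r : ℕ → Ω → ℝ}

theorem rating_mem_Icc (hbw : Bandwagon μ p lam r) {n : ℕ} (hn : 1 ≤ n) (ω : Ω) :
    r n ω ∈ Set.Icc (0 : ℝ) 1 := by
  rcases hbw.hbin n hn ω with h | h <;> simp [h]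

theorem abs_sub_le_one (hbw : Bandwagon μ p lam r) {x : ℝ} (hx : x ∈ Set.Icc (0 : ℝ) 1) :
    |x - p| ≤ 1 :=
  abs_sub_le_iff.mpr ⟨by linarith [hx.2, hbw.hp.1], by linarith [hx.1, hbw.hp.2]⟩

theorem abs_pbar_sub_le_one (hbw : Bandwagon μ p lam r) (n : ℕ) (ω : Ω) :
    |pbar r n ω - p| ≤ 1 :=
  hbw.abs_sub_le_one (pbar_mem_Icc (fun _ hi => hbw.rating_mem_Icc hi) ω)

theorem abs_rating_sub_le_one (hbw : Bandwagon μ p lam r) {n : ℕ} (hn : 1 ≤ n) (ω : Ω) :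
    |r n ω - p| ≤ 1 :=
  hbw.abs_sub_le_one (hbw.rating_mem_Icc hn ω)

theorem integrable_of_abs_le_one (hbw : Bandwagon μ p lam r) {f : Ω → ℝ} (hf : Measurable f)
    (hb : ∀ ω, |f ω| ≤ 1) : Integrable f μ :=
  have := hbw.prob
  .of_bound hf.aestronglyMeasurable 1 (.of_forall hb)

theorem integrable_rating (hbw : Bandwagon μ p lam r) {n : ℕ} (hn : 1 ≤ n) :
    Integrable (r n) μ :=
  hbw.integrable_of_abs_le_one (hbw.hmeas n) fun ω =>
    abs_le.mpr ⟨by linarith [(hbw.rating_mem_Icc hn ω).1], (hbw.rating_mem_Icc hn ω).2⟩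

theorem integral_mul_rating_sub (hbw : Bandwagon μ p lam r) {n : ℕ} (hn : 1 ≤ n) {f : Ω → ℝ}
    (hf : Measurable[ratingsAlg r n] f) (hfb : ∀ ω, |f ω| ≤ 1) :
    ∫ ω, f ω * (r (n + 1) ω - p) ∂μ = (1 - lam (n + 1)) * ∫ ω, f ω * (pbar r n ω - p) ∂μ := by
  have := hbw.prob
  have hm := ratingsAlg_le hbw.hmeas n
  have hr := hbw.integrable_rating (n := n + 1) (by omega)
  have hdev : Integrable (fun ω => r (n + 1) ω - p) μ := hr.sub (integrable_const p)
  have hfdev : Integrable (fun ω => f ω * (r (n + 1) ω - p)) μ :=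
    hdev.bdd_mul (hf.mono hm le_rfl).aestronglyMeasurable (.of_forall hfb)
  have hcond : μ[fun ω => r (n + 1) ω - p | ratingsAlg r n]
      =ᵐ[μ] fun ω => (1 - lam (n + 1)) * (pbar r n ω - p) := by
    filter_upwards [condExp_sub hr (integrable_const p) (ratingsAlg r n),
      hbw.hcond (n + 1) (by omega)] with ω h₁ h₂
    rw [condExp_const hm] at h₁
    simp only [Pi.sub_apply, add_tsub_cancel_right] at h₁ h₂
    refine h₁.trans ?_
    rw [h₂]; ring
  calc ∫ ω, f ω * (r (n + 1) ω - p) ∂μ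
      = ∫ ω, (μ[fun ω => f ω * (r (n + 1) ω - p) | ratingsAlg r n]) ω ∂μ :=
        (integral_condExp hm).symm
    _ = ∫ ω, f ω * ((1 - lam (n + 1)) * (pbar r n ω - p)) ∂μ := by
        refine integral_congr_ae
          ((condExp_mul_of_stronglyMeasurable_left hf.stronglyMeasurable hfdev hdev).trans ?_)
        filter_upwards [hcond] with ω h
        simp [h]
    _ = (1 - lam (n + 1)) * ∫ ω, f ω * (pbar r n ω - p) ∂μ := by
        rw [← integral_const_mul]; congr 1; ext ω; ring

theorem integrable_pbar (hbw : Bandwagon μ p lam r) (n : ℕ) : Integrable (pbar r n) μ :=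
  hbw.integrable_of_abs_le_one (measurable_pbar hbw.hmeas n) fun ω =>
    have h := pbar_mem_Icc (fun _ hi => hbw.rating_mem_Icc hi) ω
    abs_le.mpr ⟨by linarith [h.1], h.2⟩

theorem integral_rating_succ (hbw : Bandwagon μ p lam r) {n : ℕ} (hn : 1 ≤ n)
    (hpbar : ∫ ω, pbar r n ω ∂μ = p) : ∫ ω, r (n + 1) ω ∂μ = p := by
  have := hbw.prob
  have h := hbw.integral_mul_rating_sub hn (f := fun _ => 1) measurable_const (by simp)
  simp only [one_mul] at h
  rw [integral_sub (hbw.integrable_rating (by omega)) (integrable_const p),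
    integral_sub (hbw.integrable_pbar n) (integrable_const p), hpbar] at h
  simpa [sub_eq_zero] using h

theorem integral_pbar (hbw : Bandwagon μ p lam r) {n : ℕ} (hn : 1 ≤ n) :
    ∫ ω, pbar r n ω ∂μ = p := by
  induction n, hn using Nat.le_induction with
  | base => rw [pbar_one, hbw.hfirst]
  | succ n hn ih =>
    have := hbw.prob
    simp_rw [pbar_succ n]
    rw [integral_div, integral_add ((hbw.integrable_pbar n).const_mul _)
      (hbw.integrable_rating (by omega)), integral_const_mul, ih, hbw.integral_rating_succ hn ih]
    field_simp

theorem integral_rating (hbw : Bandwagon μ p lam r) {n : ℕ} (hn : 1 ≤ n) :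
    ∫ ω, r n ω ∂μ = p := by
  obtain rfl | ⟨m, hm, rfl⟩ : n = 1 ∨ ∃ m, 1 ≤ m ∧ n = m + 1 := by
    rcases n with _ | _ | m <;> simp_all
  · exact hbw.hfirst
  · exact hbw.integral_rating_succ hm (hbw.integral_pbar hm)

theorem integral_sq_rating_sub (hbw : Bandwagon μ p lam r) {n : ℕ} (hn : 1 ≤ n) :
    ∫ ω, (r n ω - p) ^ 2 ∂μ = p * (1 - p) := by
  have := hbw.prob
  have hbin : ∀ ω, (r n ω - p) ^ 2 = (1 - 2 * p) * r n ω + p ^ 2 := fun ω => by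
    rcases hbw.hbin n hn ω with h | h <;> rw [h] <;> ring
  simp_rw [hbin]
  rw [integral_add ((hbw.integrable_rating hn).const_mul _) (integrable_const _),
    integral_const_mul, hbw.integral_rating hn, integral_const]
  simp only [probReal_univ, smul_eq_mul]
  ring

theorem integral_sq_pbar_sub_succ (hbw : Bandwagon μ p lam r) {n : ℕ} (hn : 1 ≤ n) :
    ∫ ω, (pbar r (n + 1) ω - p) ^ 2 ∂μ
      = n * (n + 2 - 2 * lam (n + 1)) / ((n : ℝ) + 1) ^ 2 * ∫ ω, (pbar r n ω - p) ^ 2 ∂μ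
        + p * (1 - p) / ((n : ℝ) + 1) ^ 2 := by
  set g : Ω → ℝ := fun ω => pbar r n ω - p
  set e : Ω → ℝ := fun ω => r (n + 1) ω - p
  have hg : Measurable[ratingsAlg r n] g := (measurable_ratingsAlg_pbar n).sub_const p
  have hgb : ∀ ω, |g ω| ≤ 1 := hbw.abs_pbar_sub_le_one n
  have heb : ∀ ω, |e ω| ≤ 1 := hbw.abs_rating_sub_le_one (by omega)
  have hsplit : ∀ ω, (pbar r (n + 1) ω - p) ^ 2
      = (n ^ 2 * g ω ^ 2 + 2 * n * (g ω * e ω) + e ω ^ 2) / ((n : ℝ) + 1) ^ 2 := fun ω => by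
    simp only [g, e, pbar_succ n]
    field_simp
    ring
  have hg2 : Integrable (fun ω => g ω ^ 2) μ :=
    hbw.integrable_of_abs_le_one ((hg.mono (ratingsAlg_le hbw.hmeas n) le_rfl).pow_const 2)
      fun ω => by rw [abs_pow]; exact pow_le_one₀ (abs_nonneg _) (hgb ω)
  have hge : Integrable (fun ω => g ω * e ω) μ :=
    hbw.integrable_of_abs_le_one ((hg.mono (ratingsAlg_le hbw.hmeas n) le_rfl).mul
      ((hbw.hmeas _).sub_const p)) fun ω => by
        rw [abs_mul]; exact mul_le_one₀ (hgb ω) (abs_nonneg _) (heb ω)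
  have he2 : Integrable (fun ω => e ω ^ 2) μ :=
    hbw.integrable_of_abs_le_one (((hbw.hmeas _).sub_const p).pow_const 2)
      fun ω => by rw [abs_pow]; exact pow_le_one₀ (abs_nonneg _) (heb ω)
  have hcross : ∫ ω, g ω * e ω ∂μ = (1 - lam (n + 1)) * ∫ ω, g ω ^ 2 ∂μ := by
    simpa only [sq] using hbw.integral_mul_rating_sub hn hg hgb
  have hmix : Integrable (fun ω => (n : ℝ) ^ 2 * g ω ^ 2 + 2 * n * (g ω * e ω)) μ :=
    (hg2.const_mul _).add (hge.const_mul _)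
  simp_rw [hsplit]
  rw [integral_div, integral_add hmix he2,
    integral_add (hg2.const_mul _) (hge.const_mul _), integral_const_mul, integral_const_mul,
    hcross, hbw.integral_sq_rating_sub (by omega)]
  field_simp
  ring

end Bandwagon

theorem bandwagon_efficiency_closed_form {Ω : Type*} [MeasurableSpace Ω] (μ : MeasureTheory.Measure Ω)
    (p : ℝ) (lam : ℕ → ℝ) (r : ℕ → Ω → ℝ)
    (hbw : Bandwagon μ p lam r) :
    ∀ n, 1 ≤ n →
      ∫ ω, (pbar r n ω - p) ^ 2 ∂μ
        = p * (1 - p) *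
            (1 / (n : ℝ) ^ 2 +
              ∑ i ∈ Finset.Icc 1 (n - 1), (1 / (i : ℝ) ^ 2) *
                ∏ j ∈ Finset.Icc (i + 1) n,
                  ((j : ℝ) - 1) * ((j : ℝ) + 1 - 2 * lam j) / (j : ℝ) ^ 2) := by
  intro n hn
  have hsol := eq_sum_mul_prod_of_linear_rec
    (a := fun j => ((j : ℝ) - 1) * ((j : ℝ) + 1 - 2 * lam j) / (j : ℝ) ^ 2)
    (b := fun i => p * (1 - p) / (i : ℝ) ^ 2) (v := fun n => ∫ ω, (pbar r n ω - p) ^ 2 ∂μ)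
    (by simp [pbar_one, hbw.integral_sq_rating_sub le_rfl])
    (fun m hm => by rw [hbw.integral_sq_pbar_sub_succ hm]; push_cast; ring) n hn
  obtain ⟨k, rfl⟩ : ∃ k, n = k + 1 := ⟨n - 1, by omega⟩
  rw [hsol, sum_Icc_succ_top (by omega), Icc_eq_empty (by omega : ¬k + 1 + 1 ≤ k + 1),
    prod_empty, Nat.add_sub_cancel, mul_add, mul_sum]
  simp only [div_eq_mul_one_div (p * (1 - p)), mul_assoc]
  ring
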